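/- For every n: if there exists a ⟨P2P3⟩-free graph on n vertices that arrows (3,3)^e, then there exists a K_4-free graph on n vertices that arrows (3,3)^e (obtained by repeatedly deleting edges until the arrowing graph is edge-minimal). Consequently F_e(3,3;K_4) ≤ F_e(3,3;⟨P2P3⟩). -/

import Mathlib

/-!
In a ⟨P2P3⟩-free graph every triangle through an edge of a `K₄` lies inside that `K₄`: a
common neighbour of the edge outside the `K₄` would span a copy of ⟨P2P3⟩ with it. Since `K₄`
itself does not arrow `(3,3)ᵉ`, a colouring of `G` minus an edge of a `K₄` without
monochromatic triangles stays so on `G` once the `K₄` is recoloured by a good colouring of `K₄`.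
Hence deleting an edge of a `K₄` preserves arrowing, and an edge-minimal arrowing subgraph of a
⟨P2P3⟩-free arrowing graph is `K₄`-free.
-/

/-- `G → (3,3)ᵉ`: every 2-coloring of the edges of `G` contains three pairwise adjacent
vertices whose three connecting edges all have the same color. -/
def EdgeArrows33 {V : Type*} (G : SimpleGraph V) : Prop :=
  ∀ c : Sym2 V → Bool, ∃ x y z : V,
    G.Adj x y ∧ G.Adj x z ∧ G.Adj y z ∧
    c s(x, y) = c s(x, z) ∧ c s(x, z) = c s(y, z)

/-- `G` is `H`-free: `G` contains no (not necessarily induced) subgraph isomorphic to `H`,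
i.e. there is no injective graph homomorphism from `H` to `G`. -/
def HFree {W V : Type*} (H : SimpleGraph W) (G : SimpleGraph V) : Prop :=
  ¬ ∃ f : H →g G, Function.Injective f

/-- `P₂ ∪ P₃`: the disjoint union of an edge (`0-1`) and a two-edge path (`2-3-4`). -/
def P2P3 : SimpleGraph (Fin 5) :=
  SimpleGraph.fromRel (fun i j => (i = 0 ∧ j = 1) ∨ (i = 2 ∧ j = 3) ∨ (i = 3 ∧ j = 4))

/-- `⟨P2P3⟩`: the complement of `P₂ ∪ P₃`. -/
def P2P3bar : SimpleGraph (Fin 5) := P2P3ᶜ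

/-- `K₄`, the complete graph on four vertices. -/
def K4 : SimpleGraph (Fin 4) := ⊤

/-- The edge Folkman number `F_e(3,3;H)`, as an element of `ℕ∞`: the least `n`
admitting an `H`-free graph on `n` vertices arrowing `(3,3)ᵉ`. -/
noncomputable def folkmanE {W : Type*} (H : SimpleGraph W) : ℕ∞ :=
  sInf {n : ℕ∞ | ∃ m : ℕ, (m : ℕ∞) = n ∧
    ∃ G : SimpleGraph (Fin m), HFree H G ∧ EdgeArrows33 G}

open Function SimpleGraph

theorem HFree.anti {W V : Type*} {H : SimpleGraph W} {G G' : SimpleGraph V} (hle : G' ≤ G)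
    (h : HFree H G) : HFree H G' :=
  fun ⟨f, hf⟩ => h ⟨(Hom.ofLE hle).comp f, hf⟩

theorem not_edgeArrows33_K4 : ¬ EdgeArrows33 K4 := by
  intro h
  -- the edges `ij` with `i + j` odd form a 4-cycle, the others a perfect matching
  obtain ⟨x, y, z, hxy, hxz, hyz, h₁, h₂⟩ :=
    h (Sym2.lift ⟨fun i j : Fin 4 => decide ((i.val + j.val) % 2 = 1), by simp [add_comm]⟩)
  rw [K4, top_adj] at hxy hxz hyz
  revert x y z
  decide

theorem eq_or_eq_of_hFree_P2P3bar {V : Type*} {G : SimpleGraph V} (hP : HFree P2P3bar G)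
    {p q r s v : V} (hpq : p ≠ q) (hpr : G.Adj p r) (hps : G.Adj p s) (hqr : G.Adj q r)
    (hqs : G.Adj q s) (hrs : G.Adj r s) (hvp : G.Adj v p) (hvq : G.Adj v q) :
    v = r ∨ v = s := by
  by_contra! hv
  have := hpr.ne; have := hps.ne; have := hqr.ne; have := hqs.ne; have := hrs.ne
  have := hvp.ne; have := hvq.ne
  -- the non-edges `01, 23, 34` of ⟨P2P3⟩ go to `pq, rv, vs`
  refine hP ⟨⟨![p, q, r, v, s], fun {i j} hij => ?_⟩, fun i j hij => ?_⟩
  · simp only [P2P3bar, P2P3, compl_adj, fromRel_adj] at hij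
    fin_cases i <;> fin_cases j <;> simp_all [G.adj_comm]
  · fin_cases i <;> fin_cases j <;> simp_all

theorem mem_range_of_hFree_P2P3bar {V : Type*} {G : SimpleGraph V} (hP : HFree P2P3bar G)
    (f : K4 →g G) (hf : Injective f) {x y z : V} (hxy : G.Adj x y) (hxz : G.Adj x z)
    (hyz : G.Adj y z) (hx : x ∈ Set.range f) (hy : y ∈ Set.range f) : z ∈ Set.range f := by
  obtain ⟨i, rfl⟩ := hx
  obtain ⟨j, rfl⟩ := hy
  have hij : i ≠ j := fun h => hxy.ne (congrArg f h)
  have hcompl : ∀ i j : Fin 4, i ≠ j → ∃ k l, k ≠ l ∧ k ≠ i ∧ k ≠ j ∧ l ≠ i ∧ l ≠ j := by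
    decide
  obtain ⟨k, l, hkl, hki, hkj, hli, hlj⟩ := hcompl i j hij
  have hK4 {a b : Fin 4} (h : a ≠ b) : G.Adj (f a) (f b) := f.map_adj ((top_adj _ _).mpr h)
  rcases eq_or_eq_of_hFree_P2P3bar hP (hf.ne hij) (hK4 hki.symm) (hK4 hli.symm)
    (hK4 hkj.symm) (hK4 hlj.symm) (hK4 hkl) hxz.symm hyz.symm with rfl | rfl
  exacts [⟨k, rfl⟩, ⟨l, rfl⟩]

theorem EdgeArrows33.deleteEdges_of_hFree_P2P3bar {V : Type*} {G : SimpleGraph V}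
    (hP : HFree P2P3bar G) (hA : EdgeArrows33 G) (f : K4 →g G) (hf : Injective f) :
    EdgeArrows33 (G.deleteEdges {s(f 0, f 1)}) := by
  intro col
  obtain ⟨κ, hκ⟩ := not_forall.mp not_edgeArrows33_K4
  obtain ⟨x, y, z, hxy, hxz, hyz, h₁, h₂⟩ := hA (extend (Sym2.map f) κ col)
  have hrange := @mem_range_of_hFree_P2P3bar _ _ hP f hf
  by_cases hK : x ∈ Set.range f ∧ y ∈ Set.range f ∧ z ∈ Set.range f
  · obtain ⟨⟨i, rfl⟩, ⟨j, rfl⟩, ⟨k, rfl⟩⟩ := hK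
    simp only [← Sym2.map_mk, (Sym2.map.injective hf).extend_apply] at h₁ h₂
    have hK4 {a b : Fin 4} (h : G.Adj (f a) (f b)) : K4.Adj a b :=
      (top_adj _ _).mpr fun hab => h.ne (congrArg f hab)
    exact (hκ ⟨i, j, k, hK4 hxy, hK4 hxz, hK4 hyz, h₁, h₂⟩).elim
  -- no edge of the triangle lies in the `K₄`, so it avoids the deleted edge and keeps its colours
  have hout {u v : V} (huv : ¬(u ∈ Set.range f ∧ v ∈ Set.range f)) :
      s(u, v) ∉ Set.range (Sym2.map f) := by
    rintro ⟨e, he⟩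
    have hmem {w : V} (hw : w ∈ s(u, v)) : w ∈ Set.range f :=
      let ⟨a, _, ha⟩ := Sym2.mem_map.mp (he ▸ hw)
      ⟨a, ha⟩
    exact huv ⟨hmem (Sym2.mem_mk_left u v), hmem (Sym2.mem_mk_right u v)⟩
  have hxy' := hout fun h => hK ⟨h.1, h.2, hrange hxy hxz hyz h.1 h.2⟩
  have hxz' := hout fun h => hK ⟨h.1, hrange hxz hxy hyz.symm h.1 h.2, h.2⟩
  have hyz' := hout fun h => hK ⟨hrange hyz hxy.symm hxz.symm h.1 h.2, h.1, h.2⟩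
  have hdel {u v : V} (huv : G.Adj u v) (h : s(u, v) ∉ Set.range (Sym2.map f)) :
      (G.deleteEdges {s(f 0, f 1)}).Adj u v :=
    deleteEdges_adj.mpr ⟨huv, fun he => h ⟨s(0, 1), (Set.mem_singleton_iff.mp he).symm⟩⟩
  rw [extend_apply' _ _ _ hxy', extend_apply' _ _ _ hxz'] at h₁
  rw [extend_apply' _ _ _ hxz', extend_apply' _ _ _ hyz'] at h₂
  exact ⟨x, y, z, hdel hxy hxy', hdel hxz hxz', hdel hyz hyz', h₁, h₂⟩

theorem exists_le_hFree_K4_of_hFree_P2P3bar {V : Type*} [Finite V] {G : SimpleGraph V}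
    (hP : HFree P2P3bar G) (hA : EdgeArrows33 G) :
    ∃ G' ≤ G, HFree K4 G' ∧ EdgeArrows33 G' := by
  obtain ⟨G', hG'G, hmin⟩ := exists_minimal_le_of_wellFoundedLT
    (fun H : SimpleGraph V => HFree P2P3bar H ∧ EdgeArrows33 H) G ⟨hP, hA⟩
  refine ⟨G', hG'G, fun ⟨f, hf⟩ => ?_, hmin.prop.2⟩
  have hedge : s(f 0, f 1) ∈ G'.edgeSet := f.map_adj ((top_adj _ _).mpr (by decide))
  have hlt : G'.deleteEdges {s(f 0, f 1)} < G' :=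
    (deleteEdges_le _).lt_of_ne fun h =>
      (deleteEdges_eq_self.mp h).ne_of_mem hedge (Set.mem_singleton _) rfl
  exact hmin.not_lt ⟨hmin.prop.1.anti (deleteEdges_le _),
    hmin.prop.2.deleteEdges_of_hFree_P2P3bar hmin.prop.1 f hf⟩ hlt

theorem stmt_13 :
    (∀ n : ℕ, (∃ G : SimpleGraph (Fin n), HFree P2P3bar G ∧ EdgeArrows33 G) →
      ∃ G : SimpleGraph (Fin n), HFree K4 G ∧ EdgeArrows33 G) ∧
    folkmanE K4 ≤ folkmanE P2P3bar := by
  have hK4 (n : ℕ) : (∃ G : SimpleGraph (Fin n), HFree P2P3bar G ∧ EdgeArrows33 G) →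
      ∃ G : SimpleGraph (Fin n), HFree K4 G ∧ EdgeArrows33 G := fun ⟨_, hP, hA⟩ =>
    let ⟨G', _, hG'⟩ := exists_le_hFree_K4_of_hFree_P2P3bar hP hA
    ⟨G', hG'⟩
  refine ⟨hK4, sInf_le_sInf ?_⟩
  rintro _ ⟨m, rfl, hm⟩
  exact ⟨m, rfl, hK4 m hm⟩
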